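/- arXiv:math/0112150 — 3 statements merged into one kernel-verified Lean document; each statement's English description precedes it below -/
import Mathlib

section
/- Schubert classes are unique: for each binary string λ with k ones, there is at most one GKM class α which is supported above λ (α_μ ≠ 0 implies μ ≥ λ in dominance order), has α_λ = ∏_{(i,j) ∈ inv(λ)} (y_j - y_i), and has every component α_μ homogeneous of degree l(λ). -/
def ones (n : ℕ) (l : Fin n → Bool) : ℕ :=
  (Finset.univ.filter (fun i => l i = true)).card

def invCount (n : ℕ) (l : Fin n → Bool) : ℕ :=
  (Finset.univ.filter (fun p : Fin n × Fin n =>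
    p.1 < p.2 ∧ l p.1 = true ∧ l p.2 = false)).card

def psum (n : ℕ) (l : Fin n → Bool) (j : ℕ) : ℕ :=
  (Finset.univ.filter (fun i : Fin n => i.val < j ∧ l i = true)).card

/-- dominance order: `domLE n l l'` means `l ≤ l'`. -/
def domLE (n : ℕ) (l l' : Fin n → Bool) : Prop :=
  ∀ j : ℕ, psum n l j ≤ psum n l' j

/-- the identity string `0^{n-k} 1^k`. -/
def idStr (n k : ℕ) : Fin n → Bool := fun i => decide (n - k ≤ i.val)

/-- the divisor string `0^{n-k-1} 1 0 1^{k-1}`. -/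
def dvStr (n k : ℕ) : Fin n → Bool :=
  fun i => decide (i.val = n - k - 1 ∨ n - k + 1 ≤ i.val)

open MvPolynomial

noncomputable def invProd (n : ℕ) (l : Fin n → Bool) : MvPolynomial (Fin n) ℤ :=
  ∏ p ∈ Finset.univ.filter (fun p : Fin n × Fin n =>
      p.1 < p.2 ∧ l p.1 = true ∧ l p.2 = false), (X p.2 - X p.1)

/-- the GKM condition for a tuple of polynomials indexed by binary strings
(imposed on the strings with `k` ones). -/
def IsGKM (n k : ℕ) (α : (Fin n → Bool) → MvPolynomial (Fin n) ℤ) : Prop :=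
  ∀ l : Fin n → Bool, ones n l = k → ∀ i j : Fin n,
    (X i - X j : MvPolynomial (Fin n) ℤ) ∣ (α l - α (l ∘ Equiv.swap i j))

/-- `α` is supported above `l` in dominance order. -/
def SuppAbove (n k : ℕ) (α : (Fin n → Bool) → MvPolynomial (Fin n) ℤ)
    (l : Fin n → Bool) : Prop :=
  ∀ m : Fin n → Bool, ones n m = k → α m ≠ 0 → domLE n l m

/-- `S` is a family of equivariant Schubert classes. -/
def IsSchubertFamily (n k : ℕ)
    (S : (Fin n → Bool) → (Fin n → Bool) → MvPolynomial (Fin n) ℤ) : Prop :=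
  ∀ l : Fin n → Bool, ones n l = k →
    IsGKM n k (S l) ∧ SuppAbove n k (S l) l ∧ S l l = invProd n l ∧
    ∀ m : Fin n → Bool, (S l m).IsHomogeneous (invCount n l)

instance (n k : ℕ) : DecidablePred (fun l : Fin n → Bool => ones n l = k) :=
  fun _ => Nat.decEq _ _

/-!
Let `γ = α - β`: it is again a GKM class supported above `λ`, it vanishes at `λ`, and its
components are homogeneous of degree `l(λ)`. Suppose `γ_μ ≠ 0` with `l(μ)` minimal. Then `μ > λ`,
so `l(μ) > l(λ)`, because `l` is strictly monotone for the dominance order (the partial sums of `μ`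
add up to `k + l(μ) + k(k-1)/2`). For each inversion `(i, j)` of `μ` the string `(i↔j)·μ` lies
strictly below `μ`, so `γ` vanishes there by minimality and the GKM condition gives
`y_j - y_i ∣ γ_μ`. These factors are pairwise non-associated primes, so `∏_{inv(μ)} (y_j - y_i)`,
of degree `l(μ)`, divides the nonzero homogeneous `γ_μ` of degree `l(λ) < l(μ)`: a contradiction.
-/

open Finset

namespace MvPolynomial

variable {σ R : Type*}

theorem prime_X_sub_X [CommRing R] [IsDomain R] {i j : σ} (hij : i ≠ j) :
    Prime (X i - X j : MvPolynomial σ R) := by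
  classical
  let E := (renameEquiv R (Equiv.optionSubtypeNe j).symm).trans (optionEquivLeft R {b // b ≠ j})
  have hE : E (X i - X j) = -(Polynomial.X - Polynomial.C (X ⟨i, hij⟩)) := by
    simp [E, Equiv.optionSubtypeNe_symm_of_ne hij, optionEquivLeft_X_some,
      optionEquivLeft_X_none]
  rw [← MulEquiv.prime_iff E, hE]
  exact (Polynomial.prime_X_sub_C _).neg

theorem eval_eq_zero_of_X_sub_X_dvd [CommRing R] {a b : σ} {p : MvPolynomial σ R}
    (h : X a - X b ∣ p) {v : σ → R} (hv : v a = v b) : eval v p = 0 := by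
  obtain ⟨q, rfl⟩ := h
  simp [hv]

theorem eq_or_eq_swap_of_X_sub_X_dvd [CommRing R] [Nontrivial R] {a b c d : σ} (hcd : c ≠ d)
    (h : X a - X b ∣ (X c - X d : MvPolynomial σ R)) : c = a ∧ d = b ∨ c = b ∧ d = a := by
  classical
  have hmem : ∀ e, e = c ∨ e = d → e = a ∨ e = b := by
    intro e he
    by_contra! hab
    have := eval_eq_zero_of_X_sub_X_dvd h (v := Pi.single e 1) (by simp [hab.1.symm, hab.2.symm])
    rcases he with rfl | rfl <;> simp [hcd, hcd.symm] at this
  rcases hmem c (.inl rfl) with rfl | rfl <;> rcases hmem d (.inr rfl) with rfl | rfl <;> tauto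

theorem IsHomogeneous.le_of_dvd [CommSemiring R] [NoZeroDivisors R] {p q : MvPolynomial σ R}
    {c d : ℕ} (hp : p.IsHomogeneous c) (hq : q.IsHomogeneous d) (hpq : p ∣ q) (hq0 : q ≠ 0) :
    c ≤ d := by
  obtain ⟨r, rfl⟩ := hpq
  obtain ⟨hp0, hr0⟩ := mul_ne_zero_iff.mp hq0
  rw [← hp.totalDegree hp0, ← hq.totalDegree hq0, totalDegree_mul_of_isDomain hp0 hr0]
  exact Nat.le_add_right _ _

end MvPolynomial

def inversions (n : ℕ) (l : Fin n → Bool) : Finset (Fin n × Fin n) :=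
  {p | p.1 < p.2 ∧ l p.1 = true ∧ l p.2 = false}

@[simp]
lemma mem_inversions {n : ℕ} {l : Fin n → Bool} {p : Fin n × Fin n} :
    p ∈ inversions n l ↔ p.1 < p.2 ∧ l p.1 = true ∧ l p.2 = false := by
  simp [inversions]

lemma invCount_eq_card_inversions (n : ℕ) (l : Fin n → Bool) :
    invCount n l = #(inversions n l) := rfl

lemma invProd_eq_prod_inversions (n : ℕ) (l : Fin n → Bool) :
    invProd n l = ∏ p ∈ inversions n l, (X p.2 - X p.1) := rfl

lemma ones_comp_perm {n : ℕ} (l : Fin n → Bool) (σ : Equiv.Perm (Fin n)) :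
    ones n (l ∘ σ) = ones n l :=
  card_equiv σ (by simp)

lemma comp_swap_ne {n : ℕ} {m : Fin n → Bool} {i j : Fin n} (h : m i ≠ m j) :
    m ∘ Equiv.swap i j ≠ m :=
  fun hm => h (by simpa using congrFun hm j)

lemma domLE_comp_swap {n : ℕ} {m : Fin n → Bool} {i j : Fin n} (hij : i < j)
    (hi : m i = true) (hj : m j = false) : domLE n (m ∘ Equiv.swap i j) m := by
  intro t
  refine card_le_card_of_injOn (Equiv.swap i j) (fun x hx => ?_) (Equiv.injective _).injOn
  simp only [coe_filter, mem_univ, true_and, Set.mem_ofPred_eq, Function.comp_apply] at hx ⊢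
  rcases eq_or_ne x i with rfl | hxi
  · simp [hj] at hx
  rcases eq_or_ne x j with rfl | hxj
  · rw [Equiv.swap_apply_right]
    exact ⟨(Fin.lt_def.mp hij).trans hx.1, hi⟩
  · rwa [Equiv.swap_apply_of_ne_of_ne hxi hxj] at hx ⊢

lemma psum_succ {n : ℕ} (l : Fin n → Bool) (i : Fin n) :
    _root_.psum n l (i + 1) = _root_.psum n l i + if l i then 1 else 0 := by
  unfold _root_.psum
  split_ifs with h
  · rw [← card_insert_of_notMem (a := i) (by simp)]
    congr 1; ext x
    simp only [mem_filter, mem_univ, true_and, mem_insert, Fin.ext_iff]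
    grind
  · rw [add_zero]; congr 1; ext x
    simp only [mem_filter, mem_univ, true_and]
    grind

lemma eq_of_psum_eq {n : ℕ} {l m : Fin n → Bool}
    (h : ∀ j ≤ n, _root_.psum n l j = _root_.psum n m j) : l = m := by
  funext i
  have := psum_succ l i
  rw [h _ i.isLt.le, h _ i.isLt, psum_succ m i] at this
  grind

lemma sum_range_psum_eq {n : ℕ} (l : Fin n → Bool) :
    ∑ j ∈ range (n + 1), _root_.psum n l j = ∑ x : Fin n, if l x then n - x else 0 := by
  simp only [_root_.psum, card_filter]
  rw [sum_comm]
  refine sum_congr rfl fun x _ => ?_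
  by_cases h : l x
  · simp only [h, and_true, if_true]
    rw [← card_filter]
    have : (range (n + 1)).filter (fun j => (x : ℕ) < j) = Ioc (x : ℕ) n := by
      ext; simp; omega
    rw [this, Nat.card_Ioc]
  · simp [h]

lemma card_lt_and_fst_eq_sum {n : ℕ} (l : Fin n → Bool) :
    #{p : Fin n × Fin n | p.1 < p.2 ∧ l p.1} = ∑ x : Fin n, if l x then n - 1 - x else 0 := by
  rw [card_filter, ← univ_product_univ, sum_product]
  refine sum_congr rfl fun x _ => ?_
  by_cases h : l x
  · simp [h, filter_lt_eq_Ioi]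
  · simp [h]

lemma card_lt_and_fst_eq_invCount_add_choose {n : ℕ} (l : Fin n → Bool) :
    #{p : Fin n × Fin n | p.1 < p.2 ∧ l p.1} = invCount n l + (ones n l).choose 2 := by
  rw [ones, ← card_product_filter_lt, invCount, add_comm,
    ← card_filter_add_card_filter_not (p := fun p : Fin n × Fin n => l p.2)]
  congr 2 <;> ext p <;> simp <;> tauto

lemma sum_range_psum_eq_invCount {n : ℕ} (l : Fin n → Bool) :
    ∑ j ∈ range (n + 1), _root_.psum n l j = ones n l + invCount n l + (ones n l).choose 2 := by
  rw [sum_range_psum_eq, add_assoc, ← card_lt_and_fst_eq_invCount_add_choose,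
    card_lt_and_fst_eq_sum, ones, card_filter, ← sum_add_distrib]
  refine sum_congr rfl fun x _ => ?_
  have := x.isLt
  split_ifs <;> omega

lemma invCount_lt_of_domLE {n : ℕ} {l m : Fin n → Bool} (hones : ones n l = ones n m)
    (hle : domLE n l m) (hne : l ≠ m) : invCount n l < invCount n m := by
  have hsum :
      ∑ j ∈ range (n + 1), _root_.psum n l j < ∑ j ∈ range (n + 1), _root_.psum n m j := by
    refine sum_lt_sum (fun j _ => hle j) ?_
    by_contra! hge
    exact hne (eq_of_psum_eq fun j hj => (hle j).antisymm (hge j (mem_range.mpr (by omega))))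
  rw [sum_range_psum_eq_invCount, sum_range_psum_eq_invCount, hones] at hsum
  omega

lemma invCount_comp_swap_lt {n : ℕ} {m : Fin n → Bool} {p : Fin n × Fin n}
    (hp : p ∈ inversions n m) : invCount n (m ∘ Equiv.swap p.1 p.2) < invCount n m := by
  obtain ⟨h12, h1, h2⟩ := mem_inversions.mp hp
  exact invCount_lt_of_domLE (ones_comp_perm m _) (domLE_comp_swap h12 h1 h2)
    (comp_swap_ne (by simp [h1, h2]))

lemma isHomogeneous_invProd (n : ℕ) (l : Fin n → Bool) :
    (invProd n l).IsHomogeneous (invCount n l) := by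
  rw [invProd_eq_prod_inversions, invCount_eq_card_inversions, card_eq_sum_ones]
  exact IsHomogeneous.prod (inversions n l)
    (fun p => (X p.2 - X p.1 : MvPolynomial (Fin n) ℤ)) (fun _ => 1)
    (fun _ _ => (isHomogeneous_X _ _).sub (isHomogeneous_X _ _))

lemma invProd_dvd {n : ℕ} {m : Fin n → Bool} {f : MvPolynomial (Fin n) ℤ}
    (h : ∀ p ∈ inversions n m, X p.2 - X p.1 ∣ f) : invProd n m ∣ f := by
  rw [invProd_eq_prod_inversions]
  refine prod_dvd_of_isRelPrime (fun p hp q hq hpq => ?_) h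
  rw [mem_coe, mem_inversions] at hp hq
  refine (prime_X_sub_X hp.1.ne').irreducible.isRelPrime_iff_not_dvd.mpr fun hdvd => ?_
  rcases eq_or_eq_swap_of_X_sub_X_dvd hq.1.ne' hdvd with ⟨h2, h1⟩ | ⟨h2, h1⟩
  · exact hpq (Prod.ext h1.symm h2.symm)
  · rw [h1, h2] at hq
    exact hp.1.asymm hq.1

lemma IsGKM.sub {n k : ℕ} {α β : (Fin n → Bool) → MvPolynomial (Fin n) ℤ}
    (hα : IsGKM n k α) (hβ : IsGKM n k β) : IsGKM n k (α - β) := fun l hl i j => by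
  simpa only [Pi.sub_apply, sub_sub_sub_comm] using dvd_sub (hα l hl i j) (hβ l hl i j)

lemma SuppAbove.sub {n k : ℕ} {α β : (Fin n → Bool) → MvPolynomial (Fin n) ℤ}
    {l : Fin n → Bool} (hα : SuppAbove n k α l) (hβ : SuppAbove n k β l) :
    SuppAbove n k (α - β) l := by
  intro m hm hne
  by_cases hαm : α m = 0
  · exact hβ m hm fun hβm => hne (by simp [hαm, hβm])
  · exact hα m hm hαm

lemma IsGKM.invProd_dvd {n k : ℕ} {γ : (Fin n → Bool) → MvPolynomial (Fin n) ℤ}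
    (hγ : IsGKM n k γ) {m : Fin n → Bool} (hm : ones n m = k)
    (hzero : ∀ p ∈ inversions n m, γ (m ∘ Equiv.swap p.1 p.2) = 0) : invProd n m ∣ γ m :=
  _root_.invProd_dvd fun p hp => by
    simpa [Equiv.swap_comm, hzero p hp] using hγ m hm p.2 p.1

theorem IsGKM.eq_zero_of_suppAbove {n k : ℕ} {γ : (Fin n → Bool) → MvPolynomial (Fin n) ℤ}
    {lam : Fin n → Bool} (hlam : ones n lam = k) (hγ : IsGKM n k γ)
    (hsupp : SuppAbove n k γ lam) (hγlam : γ lam = 0)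
    (hhom : ∀ m, ones n m = k → (γ m).IsHomogeneous (invCount n lam)) :
    ∀ m, ones n m = k → γ m = 0 := by
  intro m hm
  induction hc : invCount n m using Nat.strong_induction_on generalizing m with
  | _ c ih =>
  by_contra hγm
  have hlt : invCount n lam < invCount n m :=
    invCount_lt_of_domLE (hlam.trans hm.symm) (hsupp m hm hγm) (by rintro rfl; exact hγm hγlam)
  have hdvd : invProd n m ∣ γ m := hγ.invProd_dvd hm fun p hp =>
    ih _ (hc ▸ invCount_comp_swap_lt hp) _ ((ones_comp_perm m _).trans hm) rfl
  exact hlt.not_ge ((isHomogeneous_invProd n m).le_of_dvd (hhom m hm) hdvd hγm)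

/-- Schubert classes are unique: there is at most one GKM class
supported above `λ`, restricting at `λ` to `∏_{(i,j)∈inv(λ)}(yⱼ-yᵢ)`, with all
components homogeneous of degree `l(λ)`. -/
theorem stmt7 (n k : ℕ) (lam : Fin n → Bool) (hlam : ones n lam = k)
    (α β : (Fin n → Bool) → MvPolynomial (Fin n) ℤ)
    (hα : IsGKM n k α) (hβ : IsGKM n k β)
    (hαs : SuppAbove n k α lam) (hβs : SuppAbove n k β lam)
    (hαr : α lam = invProd n lam) (hβr : β lam = invProd n lam)
    (hαh : ∀ m, ones n m = k → (α m).IsHomogeneous (invCount n lam))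
    (hβh : ∀ m, ones n m = k → (β m).IsHomogeneous (invCount n lam)) :
    ∀ m, ones n m = k → α m = β m := by
  intro m hm
  rw [← sub_eq_zero, ← Pi.sub_apply]
  exact (hα.sub hβ).eq_zero_of_suppAbove hlam (hαs.sub hβs) (by simp [hαr, hβr])
    (fun m hm => (hαh m hm).sub (hβh m hm)) m hm
end

section
/- If α is a GKM class, then ∂_i α := (α − s_i·α)/(y_{i+1} − y_i) is again a GKM class; that is, each component of α − s_i·α is divisible by y_{i+1} − y_i, and the quotient tuple satisfies all GKM divisibility conditions. -/
open MvPolynomial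

/-- the action `(sᵢ·α)_μ = sᵢ·(α_{sᵢμ})` of the simple transposition
`sᵢ = (i ↔ i+1)` on tuples, permuting positions and variables. -/
noncomputable def sAct (n : ℕ) (i : ℕ) (h : i + 1 < n)
    (α : (Fin n → Bool) → MvPolynomial (Fin n) ℤ) :
    (Fin n → Bool) → MvPolynomial (Fin n) ℤ :=
  fun m => rename (⇑(Equiv.swap (⟨i, by omega⟩ : Fin n) ⟨i + 1, h⟩))
    (α (m ∘ ⇑(Equiv.swap (⟨i, by omega⟩ : Fin n) ⟨i + 1, h⟩)))


section Aux

open MvPolynomial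

private lemma keyA {n : ℕ} (a b : Fin n) (p : MvPolynomial (Fin n) ℤ) :
    (X a - X b : MvPolynomial (Fin n) ℤ) ∣
      p - aeval (Function.update X a (X b)) p := by
  induction p using MvPolynomial.induction_on with
  | C c => simp
  | add p q hp hq =>
      rw [map_add]
      have hrw : p + q - (aeval (Function.update X a (X b)) p
            + aeval (Function.update X a (X b)) q)
          = (p - aeval (Function.update X a (X b)) p)
            + (q - aeval (Function.update X a (X b)) q) := by ring
      rw [hrw]; exact dvd_add hp hq
  | mul_X p j hp =>
      rw [map_mul, aeval_X]
      have h1 : p * X j - aeval (Function.update X a (X b)) p * Function.update X a (X b) j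
          = (p - aeval (Function.update X a (X b)) p) * X j
            + aeval (Function.update X a (X b)) p * (X j - Function.update X a (X b) j) := by
        ring
      rw [h1]
      refine dvd_add (hp.mul_right _) (Dvd.dvd.mul_left ?_ _)
      rcases eq_or_ne j a with rfl | hj
      · rw [Function.update_self]
      · rw [Function.update_of_ne hj]; simp

private lemma lemB {n : ℕ} {a b : Fin n} {p : MvPolynomial (Fin n) ℤ}
    (hz : aeval (Function.update X a (X b) : Fin n → MvPolynomial (Fin n) ℤ) p = 0) :
    (X a - X b : MvPolynomial (Fin n) ℤ) ∣ p := by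
  have := keyA a b p
  rwa [hz, sub_zero] at this

private lemma lemC {n : ℕ} {a b : Fin n} {p : MvPolynomial (Fin n) ℤ}
    (hd : (X a - X b : MvPolynomial (Fin n) ℤ) ∣ p) :
    aeval (Function.update X a (X b) : Fin n → MvPolynomial (Fin n) ℤ) p = 0 := by
  obtain ⟨c, rfl⟩ := hd
  rw [map_mul, map_sub, aeval_X, aeval_X, Function.update_self, Function.update_apply]
  simp

private lemma lemD {n : ℕ} (a b : Fin n) (p : MvPolynomial (Fin n) ℤ) :
    (X a - X b : MvPolynomial (Fin n) ℤ) ∣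
      p - rename (⇑(Equiv.swap a b)) p := by
  apply lemB
  rw [map_sub, aeval_rename]
  have hfe : (Function.update X a (X b)) ∘ ⇑(Equiv.swap a b)
      = (Function.update X a (X b) : Fin n → MvPolynomial (Fin n) ℤ) := by
    funext x
    rcases eq_or_ne x a with rfl | hxa
    · simp [Function.comp_apply, Equiv.swap_apply_left, Function.update_apply]
    · rcases eq_or_ne x b with rfl | hxb
      · simp [Function.comp_apply, Equiv.swap_apply_right, Function.update_apply]
      · simp only [Function.comp_apply]
        rw [Equiv.swap_apply_of_ne_of_ne hxa hxb]
  rw [hfe, sub_self]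

private lemma Xsub_ne_zero {n : ℕ} {x y : Fin n} (hxy : x ≠ y) :
    (X x - X y : MvPolynomial (Fin n) ℤ) ≠ 0 :=
  sub_ne_zero.mpr (fun hq => hxy (MvPolynomial.X_injective hq))

private lemma ones_comp {n : ℕ} (m : Fin n → Bool) (e : Equiv.Perm (Fin n)) :
    ones n (m ∘ ⇑e) = ones n m := by
  unfold ones
  apply Finset.card_bij (fun x _ => e x)
  · intro x hx
    simp only [Finset.mem_filter, Finset.mem_univ, true_and, Function.comp_apply] at hx ⊢
    exact hx
  · intro x _ y _ hxy
    exact e.injective hxy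
  · intro y hy
    refine ⟨e.symm y, ?_, by simp⟩
    simp only [Finset.mem_filter, Finset.mem_univ, true_and, Function.comp_apply,
      Equiv.apply_symm_apply] at hy ⊢
    exact hy

end Aux

/-- if `α` is a GKM class then `∂ᵢα = (α - sᵢ·α)/(y_{i+1} - yᵢ)`
is again a GKM class: each component of `α - sᵢ·α` is divisible by
`y_{i+1} - yᵢ`, and the quotient tuple satisfies the GKM conditions. -/
theorem stmt13 (n k : ℕ) (i : ℕ) (h : i + 1 < n)
    (α : (Fin n → Bool) → MvPolynomial (Fin n) ℤ) (hα : IsGKM n k α) :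
    (∀ m : Fin n → Bool, ones n m = k →
      (X ⟨i + 1, h⟩ - X ⟨i, by omega⟩ : MvPolynomial (Fin n) ℤ) ∣
        (α m - sAct n i h α m)) ∧
    (∃ β : (Fin n → Bool) → MvPolynomial (Fin n) ℤ,
      IsGKM n k β ∧
      ∀ m : Fin n → Bool, ones n m = k →
        (X ⟨i + 1, h⟩ - X ⟨i, by omega⟩ : MvPolynomial (Fin n) ℤ) * β m =
          α m - sAct n i h α m) := by
  have hin : i < n := by omega
  have hab : (⟨i, hin⟩ : Fin n) ≠ ⟨i + 1, h⟩ := by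
    intro hq
    have := congrArg Fin.val hq
    simp at this
  set a : Fin n := ⟨i, hin⟩ with ha
  set b : Fin n := ⟨i + 1, h⟩ with hb
  have htne : (X b - X a : MvPolynomial (Fin n) ℤ) ≠ 0 := Xsub_ne_zero hab.symm
  have hss : ∀ x, Equiv.swap a b (Equiv.swap a b x) = x := fun x =>
    Equiv.swap_apply_self a b x
  have hcomp : ∀ (m : Fin n → Bool), (m ∘ ⇑(Equiv.swap a b)) ∘ ⇑(Equiv.swap a b) = m :=
    fun m => funext fun x => congrArg m (hss x)
  set γ : (Fin n → Bool) → MvPolynomial (Fin n) ℤ :=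
    fun m => α m - rename (⇑(Equiv.swap a b)) (α (m ∘ ⇑(Equiv.swap a b))) with hγ
  have hsAct : ∀ m, α m - sAct n i h α m = γ m := fun m => rfl
  -- part 1: divisibility
  have part1 : ∀ m, ones n m = k → (X b - X a : MvPolynomial (Fin n) ℤ) ∣ γ m := by
    intro m hm
    have d1 : (X b - X a : MvPolynomial (Fin n) ℤ) ∣
        α m - α (m ∘ ⇑(Equiv.swap a b)) := by
      have := hα m hm b a
      rwa [Equiv.swap_comm b a] at this
    have d2 : (X b - X a : MvPolynomial (Fin n) ℤ) ∣
        α (m ∘ ⇑(Equiv.swap a b))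
          - rename (⇑(Equiv.swap a b)) (α (m ∘ ⇑(Equiv.swap a b))) := by
      have := lemD b a (α (m ∘ ⇑(Equiv.swap a b)))
      rwa [Equiv.swap_comm b a] at this
    have := dvd_add d1 d2
    rwa [sub_add_sub_cancel] at this
  -- γ satisfies the GKM conditions
  have gkmγ : ∀ l, ones n l = k → ∀ a' b' : Fin n,
      (X a' - X b' : MvPolynomial (Fin n) ℤ) ∣
        γ l - γ (l ∘ ⇑(Equiv.swap a' b')) := by
    intro l hl a' b'
    have hτ : ∀ x, Equiv.swap (Equiv.swap a b a') (Equiv.swap a b b') x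
        = Equiv.swap a b (Equiv.swap a' b' (Equiv.swap a b x)) := by
      intro x
      rw [Equiv.swap_apply_apply]
      simp [Equiv.Perm.mul_apply, Equiv.swap_inv]
    have hcomp2 : (l ∘ ⇑(Equiv.swap a' b')) ∘ ⇑(Equiv.swap a b)
        = (l ∘ ⇑(Equiv.swap a b)) ∘ ⇑(Equiv.swap (Equiv.swap a b a') (Equiv.swap a b b')) := by
      funext x
      simp only [Function.comp_apply, hτ x, hss]
    have d1 : (X a' - X b' : MvPolynomial (Fin n) ℤ) ∣
        α l - α (l ∘ ⇑(Equiv.swap a' b')) := hα l hl a' b'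
    have d2 : (X a' - X b' : MvPolynomial (Fin n) ℤ) ∣
        rename (⇑(Equiv.swap a b)) (α (l ∘ ⇑(Equiv.swap a b)))
          - rename (⇑(Equiv.swap a b)) (α ((l ∘ ⇑(Equiv.swap a' b')) ∘ ⇑(Equiv.swap a b))) := by
      have hl' : ones n (l ∘ ⇑(Equiv.swap a b)) = k := by
        rw [ones_comp]; exact hl
      have hd := hα (l ∘ ⇑(Equiv.swap a b)) hl' (Equiv.swap a b a') (Equiv.swap a b b')
      have hmap := map_dvd (rename (⇑(Equiv.swap a b)) :
        MvPolynomial (Fin n) ℤ →ₐ[ℤ] MvPolynomial (Fin n) ℤ) hd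
      rw [map_sub, map_sub, rename_X, rename_X, hss, hss] at hmap
      rwa [hcomp2]
    have hdd := dvd_sub d1 d2
    have heq : γ l - γ (l ∘ ⇑(Equiv.swap a' b'))
        = (α l - α (l ∘ ⇑(Equiv.swap a' b')))
          - (rename (⇑(Equiv.swap a b)) (α (l ∘ ⇑(Equiv.swap a b)))
            - rename (⇑(Equiv.swap a b)) (α ((l ∘ ⇑(Equiv.swap a' b')) ∘ ⇑(Equiv.swap a b)))) := by
      simp only [hγ]; ring
    rw [heq]; exact hdd
  -- define β by choice
  have hex : ∀ m, ones n m = k → ∃ c, γ m = (X b - X a : MvPolynomial (Fin n) ℤ) * c :=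
    fun m hm => part1 m hm
  set β : (Fin n → Bool) → MvPolynomial (Fin n) ℤ :=
    fun m => if hm : ones n m = k then (hex m hm).choose else 0 with hβdef
  have hβ : ∀ m (hm : ones n m = k),
      (X b - X a : MvPolynomial (Fin n) ℤ) * β m = γ m := by
    intro m hm
    simp only [hβdef, dif_pos hm]
    exact ((hex m hm).choose_spec).symm
  have hGKM : IsGKM n k β := by
    intro l hl a' b'
    have hl' : ones n (l ∘ ⇑(Equiv.swap a' b')) = k := by rw [ones_comp]; exact hl
    have key : (X b - X a : MvPolynomial (Fin n) ℤ)
        * (β l - β (l ∘ ⇑(Equiv.swap a' b')))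
        = γ l - γ (l ∘ ⇑(Equiv.swap a' b')) := by
      rw [mul_sub, hβ l hl, hβ _ hl']
    by_cases hab' : a' = b'
    · subst hab'
      have hid : l ∘ ⇑(Equiv.swap a' a') = l := by
        funext x; simp [Equiv.swap_self]
      rw [hid]
      simp
    by_cases hpair : (a' = a ∧ b' = b) ∨ (a' = b ∧ b' = a)
    · -- the t² case
      have hq := hα l hl b a
      rw [Equiv.swap_comm b a] at hq
      obtain ⟨u, hu⟩ := hq
      have hD := lemD b a u
      rw [Equiv.swap_comm b a] at hD
      obtain ⟨v, hv⟩ := hD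
      have hγγ : γ l - γ (l ∘ ⇑(Equiv.swap a b))
          = (X b - X a : MvPolynomial (Fin n) ℤ)
            * ((X b - X a : MvPolynomial (Fin n) ℤ) * v) := by
        have e1 : γ l - γ (l ∘ ⇑(Equiv.swap a b))
            = (α l - α (l ∘ ⇑(Equiv.swap a b)))
              + rename (⇑(Equiv.swap a b)) (α l - α (l ∘ ⇑(Equiv.swap a b))) := by
          simp only [hγ, hcomp l, map_sub]; ring
        rw [e1, hu, map_mul]
        have e2 : rename (⇑(Equiv.swap a b)) (X b - X a : MvPolynomial (Fin n) ℤ)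
            = -(X b - X a) := by
          rw [map_sub, rename_X, rename_X, Equiv.swap_apply_right, Equiv.swap_apply_left]
          ring
        rw [e2]
        have e3 : (X b - X a : MvPolynomial (Fin n) ℤ) * u
              + -(X b - X a) * rename (⇑(Equiv.swap a b)) u
            = (X b - X a) * (u - rename (⇑(Equiv.swap a b)) u) := by ring
        rw [e3, hv]
      rcases hpair with ⟨h1, h2⟩ | ⟨h1, h2⟩
      · rw [h1, h2] at key ⊢
        have hδ : β l - β (l ∘ ⇑(Equiv.swap a b))
            = (X b - X a : MvPolynomial (Fin n) ℤ) * v :=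
          mul_left_cancel₀ htne (key.trans hγγ)
        exact ⟨-v, by rw [hδ]; ring⟩
      · rw [h1, h2, Equiv.swap_comm b a] at key ⊢
        have hδ : β l - β (l ∘ ⇑(Equiv.swap a b))
            = (X b - X a : MvPolynomial (Fin n) ℤ) * v :=
          mul_left_cancel₀ htne (key.trans hγγ)
        exact ⟨v, hδ⟩
    · -- the coprime case
      have hdvd : (X a' - X b' : MvPolynomial (Fin n) ℤ) ∣
          (X b - X a : MvPolynomial (Fin n) ℤ)
            * (β l - β (l ∘ ⇑(Equiv.swap a' b'))) := by
        rw [key]; exact gkmγ l hl a' b'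
      have hz := lemC hdvd
      rw [map_mul] at hz
      have hφt : aeval (Function.update X a' (X b') : Fin n → MvPolynomial (Fin n) ℤ)
          (X b - X a : MvPolynomial (Fin n) ℤ) ≠ 0 := by
        rw [map_sub, aeval_X, aeval_X, Function.update_apply, Function.update_apply]
        by_cases h1 : b = a'
        · rw [if_pos h1, if_neg (show ¬ a = a' from fun hq => hab (hq.trans h1.symm))]
          refine Xsub_ne_zero (fun hq => hpair ?_)
          exact Or.inr ⟨h1.symm, hq⟩
        · rw [if_neg h1]
          by_cases h2 : a = a'
          · rw [if_pos h2]
            refine Xsub_ne_zero (fun hq => hpair ?_)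
            exact Or.inl ⟨h2.symm, hq.symm⟩
          · rw [if_neg h2]
            exact htne
      have hz' : aeval (Function.update X a' (X b') : Fin n → MvPolynomial (Fin n) ℤ)
          (β l - β (l ∘ ⇑(Equiv.swap a' b'))) = 0 := by
        rcases mul_eq_zero.mp hz with hzz | hzz
        · exact absurd hzz hφt
        · exact hzz
      exact lemB hz'
  constructor
  · intro m hm
    rw [hsAct m]
    exact part1 m hm
  · exact ⟨β, hGKM, fun m hm => by rw [hsAct m]; exact hβ m hm⟩
end

section
/- For every binary string λ of length n with k ones, there exists exactly one puzzle (tiling of the size-n triangular region by 0-triangles, 1-triangles, ordinary rhombi, and equivariant rhombi with matching edge labels) with boundary Δ_{λλ}^λ (all three sides labeled λ), and its weight is ∏_{(i,j)∈inv(λ)} (y_j − y_i). -/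
open MvPolynomial

/-!  Puzzles.  We encode a puzzle of size `n` by labelling the unit edges of
the triangular lattice inside an upward equilateral triangle of side `n`.
Rows are numbered `r = 0, …, n-1` from the top; row `r` contains upward unit
triangles `(r, c)` for `0 ≤ c ≤ r` and downward unit triangles `(r, c)` for
`0 ≤ c < r`.  `L r c`, `R r c`, `B r c` are the labels of the NW-edge, NE-edge
and S-edge of the upward triangle `(r, c)`; the downward triangle `(r, c)` has
SW-edge `R r c`, SE-edge `L r (c+1)` and N-edge `B (r-1) c`.

Labels `0` and `1` are the puzzle-edge labels; a rhombus piece (two unit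
triangles glued along an edge) is encoded by giving its interior diagonal the
label `2` for the three ordinary rhombi, and `3` for the equivariant rhombus
(the N-S rhombus with `0`s and `1`s exchanged).  Thus the allowed labels of an
upward triangle `(NW, NE, S)` are: the two triangle pieces `(0,0,0)`,
`(1,1,1)`; the upper halves `(1,0,2)`, `(2,1,0)`, `(0,2,1)` of the ordinary
N-S, NW-SE and SW-NE rhombi; and the upper half `(0,1,3)` of the equivariant
piece.  Similarly for downward triangles `(SW, SE, N)`.  -/

/-- allowed labels `(NW, NE, S)` of an upward unit triangle. -/
def UpOK (a b c : ℕ) : Prop :=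
  (a, b, c) = (0, 0, 0) ∨ (a, b, c) = (1, 1, 1) ∨ (a, b, c) = (1, 0, 2) ∨
  (a, b, c) = (2, 1, 0) ∨ (a, b, c) = (0, 2, 1) ∨ (a, b, c) = (0, 1, 3)

/-- allowed labels `(SW, SE, N)` of a downward unit triangle. -/
def DownOK (a b c : ℕ) : Prop :=
  (a, b, c) = (0, 0, 0) ∨ (a, b, c) = (1, 1, 1) ∨ (a, b, c) = (0, 1, 2) ∨
  (a, b, c) = (1, 2, 0) ∨ (a, b, c) = (2, 0, 1) ∨ (a, b, c) = (1, 0, 3)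

/-- A puzzle of size `n`: a tiling of the size-`n` upward triangle by
`0`-triangles, `1`-triangles, ordinary rhombi and equivariant rhombi with
matching edge labels (out-of-range labels are normalised to `0`). -/
structure Puzzle (n : ℕ) where
  L : ℕ → ℕ → ℕ
  R : ℕ → ℕ → ℕ
  B : ℕ → ℕ → ℕ
  up_ok : ∀ r c, c ≤ r → r < n → UpOK (L r c) (R r c) (B r c)
  down_ok : ∀ r c, c < r → r < n → DownOK (R r c) (L r (c + 1)) (B (r - 1) c)
  L_junk : ∀ r c, ¬(c ≤ r ∧ r < n) → L r c = 0
  R_junk : ∀ r c, ¬(c ≤ r ∧ r < n) → R r c = 0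
  B_junk : ∀ r c, ¬(c ≤ r ∧ r < n) → B r c = 0

def b2n (b : Bool) : ℕ := if b then 1 else 0

/-- `P` has boundary `Δ_{λμ}^ν`: NW side `λ`, NE side `μ`, S side `ν`, all
read left-to-right. -/
def HasBoundary (n : ℕ) (P : Puzzle n) (lam mu nu : Fin n → Bool) : Prop :=
  (∀ r : Fin n, P.L r.val 0 = b2n (lam ⟨n - 1 - r.val, by have := r.isLt; omega⟩)) ∧
  (∀ r : Fin n, P.R r.val r.val = b2n (mu r)) ∧
  (∀ c : Fin n, P.B (n - 1) c.val = b2n (nu c))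

/-- the weight of a puzzle: the product over its equivariant pieces (the
upward triangle `(r,c)` with S-label `3`) of `y_j - y_i`, where the lines
dropped SW and SE from the piece exit the S side at the `i`-th and `j`-th
places. -/
noncomputable def wt (n : ℕ) (P : Puzzle n) : MvPolynomial (Fin n) ℤ :=
  ∏ r : Fin n, ∏ c : Fin n,
    if h : c.val ≤ r.val ∧ P.B r.val c.val = 3 then
      (X (⟨n - 1 - r.val + c.val, by have := r.isLt; omega⟩ : Fin n) - X c :
        MvPolynomial (Fin n) ℤ)
    else 1

/-! In the canonical puzzle each letter of `λ` on the NE side travels unchanged down its SW line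
and each letter on the NW side down its SE line; a `1` going SW crosses a `0` going SE exactly
in an equivariant piece, so these pieces sit at the inversions of `λ`.

Uniqueness comes from two conservation laws. Weight every horizontal edge by the S-side position
of its SW line (resp. SE line). The total weight of the `1`s carried down SW (resp. SE) lines
changes from one row to the next only by what enters through the NE (resp. NW) side, minus one
unit for each interior NW (resp. NE) edge labelled `2`. Since the S side carries exactly what
entered, no such edge is labelled `2`, and then each row is forced by the row above it. -/

attribute [ext] Puzzle

open Finset

namespace Puzzle

variable {n : ℕ}

def letter (lam : Fin n → Bool) (m : ℕ) : Bool := if h : m < n then lam ⟨m, h⟩ else false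

@[simp]
lemma letter_val (lam : Fin n → Bool) (i : Fin n) : letter lam i = lam i := by
  simp [letter]

def southLabel (nw ne : Bool) : ℕ := if nw = ne then b2n ne else if ne then 3 else 2

lemma southLabel_self (b : Bool) : southLabel b b = b2n b := if_pos rfl

lemma southLabel_eq_three_iff {nw ne : Bool} :
    southLabel nw ne = 3 ↔ nw = false ∧ ne = true := by
  cases nw <;> cases ne <;> decide

/-- On a horizontal edge, `rho` detects a `1` travelling down a SW line and `sigma` a `1`
travelling down a SE line; `tau` detects the label `2` through which they can leak. -/
def rho (x : ℕ) : ℤ := if x = 1 ∨ x = 3 then 1 else 0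

def sigma (x : ℕ) : ℤ := if x = 1 ∨ x = 2 then 1 else 0

def tau (x : ℕ) : ℤ := if x = 2 then 1 else 0

lemma rho_b2n (b : Bool) : rho (b2n b) = b2n b := by cases b <;> rfl

lemma sigma_b2n (b : Bool) : sigma (b2n b) = b2n b := by cases b <;> rfl

lemma tau_b2n (b : Bool) : tau (b2n b) = 0 := by cases b <;> rfl

lemma tau_nonneg (x : ℕ) : 0 ≤ tau x := by unfold tau; split <;> norm_num

lemma ne_two_of_sum_sum_tau_eq_zero {N : ℕ} {f : ℕ → ℕ → ℕ}
    (h : ∑ r ∈ range N, ∑ c ∈ range r, tau (f r c) = 0) {r c : ℕ} (hr : r < N) (hc : c < r) :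
    f r c ≠ 2 := by
  intro h2
  have hrow := (sum_eq_zero_iff_of_nonneg fun i _ => sum_nonneg fun j _ => tau_nonneg (f i j)).1
    h r (mem_range.2 hr)
  have := (sum_eq_zero_iff_of_nonneg fun j _ => tau_nonneg (f r j)).1 hrow c (mem_range.2 hc)
  simp [h2, tau] at this

end Puzzle

section Pieces

open Puzzle

variable {a b s t : ℕ}

lemma UpOK.south_unique {s' : ℕ} (h : UpOK a b s) (h' : UpOK a b s') : s = s' := by
  simp only [UpOK, Prod.mk.injEq] at h h'
  omega

lemma upOK_southLabel (nw ne : Bool) : UpOK (b2n nw) (b2n ne) (southLabel nw ne) := by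
  cases nw <;> cases ne <;> simp [UpOK, southLabel, b2n]

lemma downOK_southLabel (nw ne : Bool) : DownOK (b2n ne) (b2n nw) (southLabel nw ne) := by
  cases nw <;> cases ne <;> simp [DownOK, southLabel, b2n]

lemma UpOK.eq_southLabel {nw ne : Bool} (h : UpOK (b2n nw) (b2n ne) s) :
    s = southLabel nw ne :=
  h.south_unique (upOK_southLabel nw ne)

lemma DownOK.eq_of_north {nw ne : Bool} (h : DownOK a b (southLabel nw ne))
    (ha : a ≠ 2) (hb : b ≠ 2) : a = b2n ne ∧ b = b2n nw := by
  cases nw <;> cases ne <;> simp [DownOK, southLabel, b2n] at h ⊢ <;> omega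

lemma UpOK.rho_south (h : UpOK a b s) : rho s = sigma b - tau a := by
  obtain ⟨⟨⟩, ⟨⟩⟩ | ⟨⟨⟩, ⟨⟩⟩ | ⟨⟨⟩, ⟨⟩⟩ | ⟨⟨⟩, ⟨⟩⟩ | ⟨⟨⟩, ⟨⟩⟩ | ⟨⟨⟩, ⟨⟩⟩ := h <;> rfl

lemma UpOK.sigma_south (h : UpOK a b s) : sigma s = rho a + tau b := by
  obtain ⟨⟨⟩, ⟨⟩⟩ | ⟨⟨⟩, ⟨⟩⟩ | ⟨⟨⟩, ⟨⟩⟩ | ⟨⟨⟩, ⟨⟩⟩ | ⟨⟨⟩, ⟨⟩⟩ | ⟨⟨⟩, ⟨⟩⟩ := h <;> rfl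

lemma DownOK.rho_north (h : DownOK a b t) : rho t = sigma a - tau b := by
  obtain ⟨⟨⟩, ⟨⟩⟩ | ⟨⟨⟩, ⟨⟩⟩ | ⟨⟨⟩, ⟨⟩⟩ | ⟨⟨⟩, ⟨⟩⟩ | ⟨⟨⟩, ⟨⟩⟩ | ⟨⟨⟩, ⟨⟩⟩ := h <;> rfl

lemma DownOK.sigma_north (h : DownOK a b t) : sigma t = rho b + tau a := by
  obtain ⟨⟨⟩, ⟨⟩⟩ | ⟨⟨⟩, ⟨⟩⟩ | ⟨⟨⟩, ⟨⟩⟩ | ⟨⟨⟩, ⟨⟩⟩ | ⟨⟨⟩, ⟨⟩⟩ | ⟨⟨⟩, ⟨⟩⟩ := h <;> rfl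

end Pieces

section Boundary

open Puzzle

variable {n : ℕ} {P : Puzzle n} {lam mu nu : Fin n → Bool}

lemma HasBoundary.L_zero (h : HasBoundary n P lam mu nu) {r : ℕ} (hr : r < n) :
    P.L r 0 = b2n (letter lam (n - 1 - r)) := by
  rw [h.1 ⟨r, hr⟩, letter, dif_pos (by omega)]

lemma HasBoundary.R_self (h : HasBoundary n P lam mu nu) {r : ℕ} (hr : r < n) :
    P.R r r = b2n (letter mu r) := by
  rw [h.2.1 ⟨r, hr⟩, letter, dif_pos hr]

lemma HasBoundary.B_bottom (h : HasBoundary n P lam mu nu) {c : ℕ} (hc : c < n) :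
    P.B (n - 1) c = b2n (letter nu c) := by
  rw [h.2.2 ⟨c, hc⟩, letter, dif_pos hc]

end Boundary

namespace Puzzle

variable {n : ℕ}

lemma upOK (P : Puzzle n) {r c : ℕ} (hc : c ≤ r) (hr : r < n) :
    UpOK (P.L r c) (P.R r c) (P.B r c) :=
  P.up_ok r c hc hr

lemma downOK_succ (P : Puzzle n) {r c : ℕ} (hc : c < r + 1) (hr : r + 1 < n) :
    DownOK (P.R (r + 1) c) (P.L (r + 1) (c + 1)) (P.B r c) :=
  P.down_ok (r + 1) c hc hr

section Canonical

variable (lam : Fin n → Bool)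

/-- The up triangle `(r, c)` lies on the SW line through position `c` of the S side and on the
SE line through position `n - 1 - r + c`. -/
def canonical : Puzzle n where
  L r c := if c ≤ r ∧ r < n then b2n (letter lam (n - 1 - r + c)) else 0
  R r c := if c ≤ r ∧ r < n then b2n (letter lam c) else 0
  B r c := if c ≤ r ∧ r < n then southLabel (letter lam (n - 1 - r + c)) (letter lam c) else 0
  up_ok r c hc hr := by
    simp only [if_pos (And.intro hc hr)]
    exact upOK_southLabel _ _
  down_ok r c hc hr := by
    simp only [if_pos (And.intro hc.le hr), if_pos (And.intro (Nat.succ_le_of_lt hc) hr),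
      if_pos (And.intro (Nat.le_sub_one_of_lt hc) (Nat.sub_lt_of_lt hr))]
    rw [show n - 1 - (r - 1) + c = n - 1 - r + (c + 1) by omega]
    exact downOK_southLabel _ _
  L_junk _ _ h := if_neg h
  R_junk _ _ h := if_neg h
  B_junk _ _ h := if_neg h

lemma canonical_hasBoundary : HasBoundary n (canonical lam) lam lam lam := by
  refine ⟨fun r => ?_, fun r => ?_, fun c => ?_⟩
  · simp only [canonical, if_pos (And.intro (Nat.zero_le _) r.isLt), add_zero]
    rw [letter, dif_pos (by omega)]
  · simp only [canonical, if_pos (And.intro le_rfl r.isLt), letter_val]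
  · have hc : c.val ≤ n - 1 ∧ n - 1 < n := ⟨Nat.le_sub_one_of_lt c.isLt, Nat.sub_lt c.pos one_pos⟩
    simp only [canonical, if_pos hc, Nat.sub_self, zero_add, southLabel_self, letter_val]

lemma canonical_B_eq_three_iff {r c : ℕ} (hc : c ≤ r) (hr : r < n) :
    (canonical lam).B r c = 3 ↔ letter lam c = true ∧ letter lam (n - 1 - r + c) = false := by
  simp only [canonical, if_pos (And.intro hc hr), southLabel_eq_three_iff, and_comm]

end Canonical

lemma ext_of_L_R {P Q : Puzzle n} (hL : ∀ r c, c ≤ r → r < n → P.L r c = Q.L r c)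
    (hR : ∀ r c, c ≤ r → r < n → P.R r c = Q.R r c) : P = Q := by
  ext r c
  · by_cases hrc : c ≤ r ∧ r < n
    · exact hL r c hrc.1 hrc.2
    · rw [P.L_junk r c hrc, Q.L_junk r c hrc]
  · by_cases hrc : c ≤ r ∧ r < n
    · exact hR r c hrc.1 hrc.2
    · rw [P.R_junk r c hrc, Q.R_junk r c hrc]
  · by_cases hrc : c ≤ r ∧ r < n
    · have hQ := Q.upOK hrc.1 hrc.2
      rw [← hL r c hrc.1 hrc.2, ← hR r c hrc.1 hrc.2] at hQ
      exact (P.upOK hrc.1 hrc.2).south_unique hQ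
    · rw [P.B_junk r c hrc, Q.B_junk r c hrc]

variable (P : Puzzle n)

def swMoment (r : ℕ) : ℤ := ∑ c ∈ range (r + 1), (c : ℤ) * rho (P.B r c)

def seMoment (r : ℕ) : ℤ := ∑ c ∈ range (r + 1), ((n - 1 - r + c : ℕ) : ℤ) * sigma (P.B r c)

def nwTwos (r : ℕ) : ℤ := ∑ c ∈ range r, tau (P.L r (c + 1))

def neTwos (r : ℕ) : ℤ := ∑ c ∈ range r, tau (P.R r c)

variable {P} {lam mu nu : Fin n → Bool}

lemma swMoment_succ (h : HasBoundary n P lam mu nu) {r : ℕ} (hr : r + 1 < n) :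
    P.swMoment (r + 1) =
      P.swMoment r + (r + 1 : ℕ) * b2n (letter mu (r + 1)) - P.nwTwos (r + 1) := by
  have hrow : ∀ c ∈ range (r + 1), (c : ℤ) * rho (P.B (r + 1) c) =
      c * rho (P.B r c) + ((c + 1 : ℕ) * tau (P.L (r + 1) (c + 1)) - c * tau (P.L (r + 1) c))
        - tau (P.L (r + 1) (c + 1)) := by
    intro c hc
    have hc := mem_range.1 hc
    rw [(P.upOK hc.le hr).rho_south, (P.downOK_succ hc hr).rho_north]
    push_cast
    ring
  have hlast := (P.upOK le_rfl hr).rho_south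
  rw [h.R_self hr, sigma_b2n] at hlast
  rw [swMoment, sum_range_succ, sum_congr rfl hrow, sum_sub_distrib, sum_add_distrib,
    sum_range_sub (fun c => (c : ℤ) * tau (P.L (r + 1) c)), hlast, swMoment, nwTwos]
  push_cast
  ring

lemma seMoment_succ (h : HasBoundary n P lam mu nu) {r : ℕ} (hr : r + 1 < n) :
    P.seMoment (r + 1) = P.seMoment r
      + (n - 1 - (r + 1) : ℕ) * b2n (letter lam (n - 1 - (r + 1))) - P.neTwos (r + 1) := by
  set m := n - 1 - (r + 1)
  have hrow : ∀ c ∈ range (r + 1), ((m + (c + 1) : ℕ) : ℤ) * sigma (P.B (r + 1) (c + 1)) =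
      ((n - 1 - r + c : ℕ) : ℤ) * sigma (P.B r c)
        + (((m + (c + 1) : ℕ) : ℤ) * tau (P.R (r + 1) (c + 1))
          - ((m + c : ℕ) : ℤ) * tau (P.R (r + 1) c)) - tau (P.R (r + 1) c) := by
    intro c hc
    have hc := mem_range.1 hc
    rw [(P.upOK (Nat.succ_le_of_lt hc) hr).sigma_south, (P.downOK_succ hc hr).sigma_north,
      show n - 1 - r = m + 1 by omega]
    push_cast
    ring
  have hfirst := (P.upOK (Nat.zero_le _) hr).sigma_south
  rw [h.L_zero hr, rho_b2n] at hfirst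
  rw [seMoment, sum_range_succ', sum_congr rfl hrow, sum_sub_distrib, sum_add_distrib,
    sum_range_sub (fun c => ((m + c : ℕ) : ℤ) * tau (P.R (r + 1) c)), hfirst, h.R_self hr,
    tau_b2n, seMoment, neTwos]
  push_cast
  ring

lemma swMoment_add_sum_nwTwos (h : HasBoundary n P lam mu nu) {r : ℕ} (hr : r < n) :
    P.swMoment r + ∑ i ∈ range (r + 1), P.nwTwos i =
      ∑ i ∈ range (r + 1), (i : ℤ) * b2n (letter mu i) := by
  induction r with
  | zero => simp [swMoment, nwTwos]
  | succ r ih =>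
    rw [sum_range_succ _ (r + 1), sum_range_succ _ (r + 1), swMoment_succ h hr, ← ih (by omega)]
    ring

lemma seMoment_add_sum_neTwos (h : HasBoundary n P lam mu nu) {r : ℕ} (hr : r < n) :
    P.seMoment r + ∑ i ∈ range (r + 1), P.neTwos i =
      ∑ i ∈ range (r + 1), ((n - 1 - i : ℕ) : ℤ) * b2n (letter lam (n - 1 - i)) := by
  induction r with
  | zero =>
    have hfirst := (P.upOK le_rfl hr).sigma_south
    rw [h.L_zero hr, rho_b2n, h.R_self hr, tau_b2n] at hfirst
    simp [seMoment, neTwos, hfirst]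
  | succ r ih =>
    rw [sum_range_succ _ (r + 1), sum_range_succ _ (r + 1), seMoment_succ h hr, ← ih (by omega)]
    ring

lemma swMoment_bottom (h : HasBoundary n P lam mu nu) {r : ℕ} (hr : r + 1 = n) :
    P.swMoment r = ∑ c ∈ range (r + 1), (c : ℤ) * b2n (letter nu c) := by
  subst hr
  refine sum_congr rfl fun c hc => ?_
  have hB := h.B_bottom (mem_range.1 hc)
  rw [Nat.add_sub_cancel] at hB
  rw [hB, rho_b2n]

lemma seMoment_bottom (h : HasBoundary n P lam mu nu) {r : ℕ} (hr : r + 1 = n) :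
    P.seMoment r = ∑ c ∈ range (r + 1), (c : ℤ) * b2n (letter nu c) := by
  subst hr
  refine sum_congr rfl fun c hc => ?_
  have hB := h.B_bottom (mem_range.1 hc)
  rw [Nat.add_sub_cancel] at hB
  rw [hB, sigma_b2n, Nat.add_sub_cancel, Nat.sub_self, zero_add]

lemma sum_nwTwos_eq_zero (h : HasBoundary n P lam lam lam) :
    ∑ i ∈ range n, P.nwTwos i = 0 := by
  obtain _ | m := n
  · rfl
  have := swMoment_add_sum_nwTwos h (Nat.lt_succ_self m)
  rw [swMoment_bottom h rfl] at this
  linarith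

lemma sum_neTwos_eq_zero (h : HasBoundary n P lam lam lam) :
    ∑ i ∈ range n, P.neTwos i = 0 := by
  obtain _ | m := n
  · rfl
  have := seMoment_add_sum_neTwos h (Nat.lt_succ_self m)
  rw [seMoment_bottom h rfl, sum_range_reflect (fun i => (i : ℤ) * b2n (letter lam i))] at this
  linarith

lemma L_succ_ne_two (h : HasBoundary n P lam lam lam) {r c : ℕ} (hr : r < n) (hc : c < r) :
    P.L r (c + 1) ≠ 2 :=
  ne_two_of_sum_sum_tau_eq_zero (f := fun r c => P.L r (c + 1)) (sum_nwTwos_eq_zero h) hr hc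

lemma R_ne_two (h : HasBoundary n P lam lam lam) {r c : ℕ} (hr : r < n) (hc : c < r) :
    P.R r c ≠ 2 :=
  ne_two_of_sum_sum_tau_eq_zero (sum_neTwos_eq_zero h) hr hc

lemma L_R_eq_of_hasBoundary (h : HasBoundary n P lam lam lam) {r c : ℕ} (hr : r < n)
    (hc : c ≤ r) : P.L r c = b2n (letter lam (n - 1 - r + c)) ∧ P.R r c = b2n (letter lam c) := by
  induction r generalizing c with
  | zero =>
    obtain rfl := Nat.le_zero.1 hc
    exact ⟨h.L_zero hr, h.R_self hr⟩
  | succ r ih =>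
    have hbelow : ∀ c < r + 1, P.R (r + 1) c = b2n (letter lam c) ∧
        P.L (r + 1) (c + 1) = b2n (letter lam (n - 1 - (r + 1) + (c + 1))) := by
      intro c hc
      obtain ⟨hL, hR⟩ := ih (Nat.lt_of_succ_lt hr) (Nat.le_of_lt_succ hc)
      have hup := P.upOK (Nat.le_of_lt_succ hc) (Nat.lt_of_succ_lt hr)
      rw [hL, hR] at hup
      have hdown := P.downOK_succ hc hr
      rw [hup.eq_southLabel] at hdown
      rw [show n - 1 - (r + 1) + (c + 1) = n - 1 - r + c by omega]
      exact hdown.eq_of_north (R_ne_two h hr hc) (L_succ_ne_two h hr hc)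
    constructor
    · cases c with
      | zero => exact h.L_zero hr
      | succ c => exact (hbelow c (by omega)).2
    · rcases Nat.lt_or_eq_of_le hc with hc | rfl
      · exact (hbelow c hc).1
      · exact h.R_self hr

lemma eq_canonical_of_hasBoundary (h : HasBoundary n P lam lam lam) : P = canonical lam := by
  apply ext_of_L_R
  · intro r c hc hr
    simp only [canonical, if_pos (And.intro hc hr), (L_R_eq_of_hasBoundary h hr hc).1]
  · intro r c hc hr
    simp only [canonical, if_pos (And.intro hc hr), (L_R_eq_of_hasBoundary h hr hc).2]

def reflectFrom (c r : Fin n) : Fin n :=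
  if h : c ≤ r then ⟨n - 1 - r + c, by omega⟩ else r

lemma reflectFrom_val_of_le {c r : Fin n} (h : c ≤ r) :
    (reflectFrom c r : ℕ) = n - 1 - r + c := by
  rw [reflectFrom, dif_pos h]

lemma reflectFrom_of_lt {c r : Fin n} (h : r < c) : reflectFrom c r = r :=
  dif_neg (not_le.2 h)

lemma reflectFrom_involutive (c : Fin n) : Function.Involutive (reflectFrom c) := by
  intro r
  rcases le_or_gt c r with h | h
  · have hr := reflectFrom_val_of_le h
    have h' : c ≤ reflectFrom c r := by rw [Fin.le_def, hr]; omega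
    ext
    rw [reflectFrom_val_of_le h', hr]
    omega
  · rw [reflectFrom_of_lt h, reflectFrom_of_lt h]

lemma canonical_B_eq_three_iff_inversion (lam : Fin n → Bool) (c r : Fin n) :
    (c : ℕ) ≤ r ∧ (canonical lam).B r c = 3 ↔
      c < reflectFrom c r ∧ lam c = true ∧ lam (reflectFrom c r) = false := by
  rcases le_or_gt c r with h | h
  · have hr := reflectFrom_val_of_le h
    rw [canonical_B_eq_three_iff lam h r.isLt, ← hr, letter_val, letter_val]
    refine ⟨fun ⟨_, hc, hj⟩ => ⟨lt_of_le_of_ne ?_ fun hcj => ?_, hc, hj⟩,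
      fun ⟨_, hinv⟩ => ⟨h, hinv⟩⟩
    · rw [Fin.le_def, hr]
      omega
    · rw [← hcj, hc] at hj
      exact Bool.noConfusion hj
  · rw [reflectFrom_of_lt h]
    exact iff_of_false (fun h' => h'.1.not_gt h) fun h' => h'.1.not_gt h

lemma wt_canonical (lam : Fin n → Bool) : wt n (canonical lam) = invProd n lam := by
  rw [wt, prod_comm, invProd, prod_filter, Fintype.prod_prod_type]
  refine prod_congr rfl fun c _ => ?_
  refine Fintype.prod_equiv (reflectFrom_involutive c).toPerm _ _ fun r => ?_
  dsimp only [Function.Involutive.coe_toPerm]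
  have hinv := canonical_B_eq_three_iff_inversion lam c r
  split_ifs with h h' h'
  · congr 2
    ext
    exact (reflectFrom_val_of_le h.1).symm
  · exact absurd (hinv.1 h) h'
  · exact absurd (hinv.2 h') h
  · rfl

end Puzzle

theorem stmt18_general (n : ℕ) (lam : Fin n → Bool) :
    (∃! P : Puzzle n, HasBoundary n P lam lam lam) ∧
    (∀ P : Puzzle n, HasBoundary n P lam lam lam → wt n P = invProd n lam) := by
  refine ⟨⟨Puzzle.canonical lam, Puzzle.canonical_hasBoundary lam,
    fun P hP => Puzzle.eq_canonical_of_hasBoundary hP⟩, fun P hP => ?_⟩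
  rw [Puzzle.eq_canonical_of_hasBoundary hP, Puzzle.wt_canonical]

/-- for every binary string `λ` of length `n` with `k` ones
there is exactly one puzzle with boundary `Δ_{λλ}^λ`, and its weight is
`∏_{(i,j)∈inv(λ)}(yⱼ-yᵢ)`. -/
theorem stmt18 (n k : ℕ) (hk : k ≤ n) (lam : Fin n → Bool)
    (hlam : ones n lam = k) :
    (∃! P : Puzzle n, HasBoundary n P lam lam lam) ∧
    (∀ P : Puzzle n, HasBoundary n P lam lam lam → wt n P = invProd n lam) :=
  stmt18_general n lam
end
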